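/- arXiv:2209.14381 — 2 statements merged into one kernel-verified Lean document; each statement's English description precedes it below -/
import Mathlib

section
/- Let E be a Riesz space, let p, q : ℕ → ℕ satisfy the deferred property, and let (x_n) be a sequence in E and x ∈ E. Then x_n →^{D_{st_o}}_{p,q} x holds if and only if there exists a sequence (y_n) in E such that δ_{p,q}({n ∈ ℕ : x_n = y_n}) = 1 and y_n →^{D_{st_o}}_{p,q} x. -/
/-! Taking `y = x` gives one direction. Conversely, if `y` converges along a set `K` of deferred
density one, then `x` converges along `K ∩ {n | x n = y n}` with the same dominating sequence:
sets of deferred density one are closed under intersection (their ratios satisfy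
`δ(A) + δ(B) - 1 ≤ δ(A ∩ B)`), and they are infinite because a finite set has deferred
density zero once `q n → ∞`. -/

open Filter Topology

variable {E : Type*} [AddCommGroup E] [Lattice E]
  [CovariantClass E E (· + ·) (· ≤ ·)] [Module ℝ E] [PosSMulMono ℝ E]

/-- `p` and `q` satisfy the deferred property: `p n < q n` for all `n` and `q n → ∞`. -/
def DeferredProperty (p q : ℕ → ℕ) : Prop :=
  (∀ n, p n < q n) ∧ Tendsto q atTop atTop

open Classical in
/-- The ratio `|{k ∈ K : p n < k ≤ q n}| / (q n - p n)`. -/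
noncomputable def deferredRatio (p q : ℕ → ℕ) (K : Set ℕ) (n : ℕ) : ℝ :=
  (((Finset.Ioc (p n) (q n)).filter (fun k => k ∈ K)).card : ℝ) / ((q n : ℝ) - (p n : ℝ))

/-- The deferred density of `K ⊆ ℕ` is `a`. -/
def DeferredDensity (p q : ℕ → ℕ) (K : Set ℕ) (a : ℝ) : Prop :=
  Tendsto (deferredRatio p q K) atTop (nhds a)

/-- `z` is deferred statistical order decreasing to `0`: there is an (infinite) set
`K = {k₁ < k₂ < ⋯}` of deferred density one along which `z` is decreasing with infimum `0`. -/
def DStatDecreasing (p q : ℕ → ℕ) (z : ℕ → E) : Prop :=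
  ∃ K : Set ℕ, K.Infinite ∧ DeferredDensity p q K 1 ∧
    (∀ i ∈ K, ∀ j ∈ K, i ≤ j → z j ≤ z i) ∧ IsGLB (z '' K) 0

/-- `x` is deferred statistical order convergent to `l`. -/
def DStatOrderConv (p q : ℕ → ℕ) (x : ℕ → E) (l : E) : Prop :=
  ∃ z : ℕ → E, DStatDecreasing p q z ∧
    ∃ K : Set ℕ, K.Infinite ∧ DeferredDensity p q K 1 ∧ ∀ k ∈ K, |x k - l| ≤ z k


section DeferredDensity

variable {p q : ℕ → ℕ}

open Classical in
lemma card_filter_Ioc_le_sub (hpq : ∀ n, p n < q n) (K : Set ℕ) (n : ℕ) :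
    (((Finset.Ioc (p n) (q n)).filter (fun k => k ∈ K)).card : ℝ) ≤ (q n : ℝ) - (p n : ℝ) := by
  rw [← Nat.cast_sub (hpq n).le, ← Nat.card_Ioc]
  exact_mod_cast Finset.card_filter_le _ _

lemma deferredRatio_nonneg (hpq : ∀ n, p n < q n) (K : Set ℕ) (n : ℕ) :
    0 ≤ deferredRatio p q K n :=
  div_nonneg (Nat.cast_nonneg _) (sub_nonneg.2 (Nat.cast_le.2 (hpq n).le))

lemma deferredRatio_le_one (hpq : ∀ n, p n < q n) (K : Set ℕ) (n : ℕ) :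
    deferredRatio p q K n ≤ 1 :=
  div_le_one_of_le₀ (card_filter_Ioc_le_sub hpq K n) (sub_nonneg.2 (Nat.cast_le.2 (hpq n).le))

lemma deferredRatio_univ (hpq : ∀ n, p n < q n) (n : ℕ) :
    deferredRatio p q Set.univ n = 1 := by
  have hpos : (0 : ℝ) < (q n : ℝ) - (p n : ℝ) := sub_pos.2 (Nat.cast_lt.2 (hpq n))
  simp only [deferredRatio, Set.mem_univ, Finset.filter_true]
  rw [Nat.card_Ioc, Nat.cast_sub (hpq n).le, div_self hpos.ne']

lemma deferredRatio_union_add_inter (A B : Set ℕ) (n : ℕ) :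
    deferredRatio p q (A ∪ B) n + deferredRatio p q (A ∩ B) n =
      deferredRatio p q A n + deferredRatio p q B n := by
  simp only [deferredRatio, ← add_div]
  congr 1
  symm
  rw [← Nat.cast_add, ← Nat.cast_add, ← Finset.card_union_add_card_inter]
  congr 3 <;> ext <;>
    simp only [Finset.mem_union, Finset.mem_inter, Finset.mem_filter, Set.mem_union,
      Set.mem_inter_iff] <;> tauto

lemma DeferredDensity.univ (hpq : ∀ n, p n < q n) : DeferredDensity p q Set.univ 1 :=
  tendsto_const_nhds.congr fun n => (deferredRatio_univ hpq n).symm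

lemma DeferredDensity.inter (hpq : ∀ n, p n < q n) {A B : Set ℕ}
    (hA : DeferredDensity p q A 1) (hB : DeferredDensity p q B 1) :
    DeferredDensity p q (A ∩ B) 1 := by
  have hlower : Tendsto (fun n => deferredRatio p q A n + deferredRatio p q B n - 1)
      atTop (𝓝 1) := by
    simpa using (hA.add hB).sub_const 1
  refine tendsto_of_tendsto_of_tendsto_of_le_of_le hlower tendsto_const_nhds (fun n => ?_)
    (deferredRatio_le_one hpq _)
  linarith [deferredRatio_union_add_inter (p := p) (q := q) A B n,
    deferredRatio_le_one hpq (A ∪ B) n]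

open Classical in
lemma deferredRatio_le_div_of_subset_Iic (hpq : ∀ n, p n < q n) {K : Set ℕ} {N : ℕ}
    (hK : K ⊆ Set.Iic N) {n : ℕ} (hN : N ≤ q n) :
    deferredRatio p q K n ≤ N / q n := by
  have hpqn : (p n : ℝ) < q n := Nat.cast_lt.2 (hpq n)
  have hNq : (N : ℝ) ≤ q n := Nat.cast_le.2 hN
  rw [deferredRatio, div_le_div_iff₀ (by linarith) (by linarith)]
  set a := ((Finset.Ioc (p n) (q n)).filter (fun k => k ∈ K)).card
  have ha : a ≤ N - p n := by
    rw [← Nat.card_Ioc]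
    refine Finset.card_le_card fun k hk => ?_
    rw [Finset.mem_filter, Finset.mem_Ioc] at hk
    exact Finset.mem_Ioc.2 ⟨hk.1.1, hK hk.2⟩
  -- `a ≤ N - p`, and `(N - p) / (q - p) ≤ N / q` once `N ≤ q`
  rcases (by omega : a = 0 ∨ a + p n ≤ N) with ha0 | hap
  · simp only [ha0, Nat.cast_zero, zero_mul]
    exact mul_nonneg (Nat.cast_nonneg _) (by linarith)
  · have hap' : (a : ℝ) + p n ≤ N := by exact_mod_cast hap
    nlinarith [Nat.cast_nonneg (α := ℝ) (p n)]

lemma Set.Finite.deferredDensity_zero (hpq : DeferredProperty p q) {K : Set ℕ}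
    (hK : K.Finite) : DeferredDensity p q K 0 := by
  obtain ⟨N, hN⟩ := hK.bddAbove
  have hupper : Tendsto (fun n => (N : ℝ) / q n) atTop (𝓝 0) :=
    tendsto_const_nhds.div_atTop (tendsto_natCast_atTop_atTop.comp hpq.2)
  exact tendsto_of_tendsto_of_tendsto_of_le_of_le' tendsto_const_nhds hupper
    (Eventually.of_forall (deferredRatio_nonneg hpq.1 K))
    ((hpq.2.eventually_ge_atTop N).mono fun n hn =>
      deferredRatio_le_div_of_subset_Iic hpq.1 hN hn)

lemma DeferredDensity.infinite (hpq : DeferredProperty p q) {K : Set ℕ}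
    (hK : DeferredDensity p q K 1) : K.Infinite := fun hfin =>
  one_ne_zero (tendsto_nhds_unique hK (hfin.deferredDensity_zero hpq))

end DeferredDensity

lemma DStatOrderConv.congr_of_deferredDensity {F : Type*} [AddCommGroup F] [Lattice F]
    {p q : ℕ → ℕ} (hpq : DeferredProperty p q) {x y : ℕ → F} {l : F}
    (hxy : DeferredDensity p q {n | x n = y n} 1) (hy : DStatOrderConv p q y l) : DStatOrderConv p q x l := by
  obtain ⟨z, hz, K, -, hK, hyz⟩ := hy
  have hKxy : DeferredDensity p q (K ∩ {n | x n = y n}) 1 := hK.inter hpq.1 hxy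
  refine ⟨z, hz, K ∩ {n | x n = y n}, hKxy.infinite hpq, hKxy, ?_⟩
  rintro k ⟨hkK, hxyk⟩
  rw [show x k = y k from hxyk]
  exact hyz k hkK

theorem stmt4 (p q : ℕ → ℕ) (hpq : DeferredProperty p q) (x : ℕ → E) (l : E) :
    DStatOrderConv p q x l ↔
      ∃ y : ℕ → E, DeferredDensity p q {n | x n = y n} 1 ∧ DStatOrderConv p q y l :=
  ⟨fun hx => ⟨x, by simpa using DeferredDensity.univ hpq.1, hx⟩,
    fun ⟨_, hxy, hy⟩ => hy.congr_of_deferredDensity hpq hxy⟩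
end

section
/- Let E be a Riesz space and let p, q : ℕ → ℕ satisfy the deferred property. The deferred statistical order limit is uniquely determined: if x_n →^{D_{st_o}}_{p,q} x and x_n →^{D_{st_o}}_{p,q} y for the same sequence (x_n) in E, then x = y. -/
open Filter Topology

variable {E : Type*} [AddCommGroup E] [Lattice E]
  [CovariantClass E E (· + ·) (· ≤ ·)] [Module ℝ E] [PosSMulMono ℝ E]

/-!
Two sets of deferred density one meet in a set of deferred density one, which is unbounded
because `q n → ∞`. Given indices `i, j` on the sets where the dominating sequences `z, w` of the
two limits decrease, pick `k ≥ i, j` in all four sets at once: then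
`|a - b| ≤ |x k - a| + |x k - b| ≤ z k + w k ≤ z i + w j`, and taking infima over `i` and `j`
gives `|a - b| ≤ 0`.
-/

theorem nonpos_of_forall_le_add_of_isGLB {α : Type*} [AddCommGroup α] [PartialOrder α]
    [AddLeftMono α] {s t : Set α} {c : α} (hs : IsGLB s 0) (ht : IsGLB t 0)
    (h : ∀ u ∈ s, ∀ v ∈ t, c ≤ u + v) : c ≤ 0 :=
  ht.2 fun v hv => sub_nonpos.mp <| hs.2 fun u hu => sub_le_iff_le_add.mpr (h u hu v hv)

open Finset

theorem Finset.card_filter_add_card_filter_le {α : Type*} (s : Finset α) (P Q : α → Prop)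
    [DecidableEq α] [DecidablePred P] [DecidablePred Q] :
    #(s.filter P) + #(s.filter Q) ≤ #(s.filter fun a => P a ∧ Q a) + #s := by
  rw [filter_and, ← card_union_add_card_inter, add_comm]
  gcongr
  exact union_subset (filter_subset _ _) (filter_subset _ _)

namespace DeferredProperty

variable {p q : ℕ → ℕ}

theorem sub_pos (hpq : DeferredProperty p q) (n : ℕ) : (0 : ℝ) < q n - p n :=
  _root_.sub_pos.mpr (mod_cast hpq.1 n)

theorem deferredRatio_nonneg (hpq : DeferredProperty p q) (K : Set ℕ) (n : ℕ) :
    0 ≤ deferredRatio p q K n :=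
  div_nonneg (Nat.cast_nonneg _) (hpq.sub_pos n).le

end DeferredProperty

section
open Classical

variable {p q : ℕ → ℕ}

theorem deferredRatio_mono (hpq : DeferredProperty p q) {K K' : Set ℕ} (h : K ⊆ K') (n : ℕ) :
    deferredRatio p q K n ≤ deferredRatio p q K' n := by
  unfold deferredRatio
  gcongr
  exact (hpq.sub_pos n).le

theorem deferredRatio_add_le (hpq : DeferredProperty p q) (K K' : Set ℕ) (n : ℕ) :
    deferredRatio p q K n + deferredRatio p q K' n ≤ deferredRatio p q (K ∩ K') n + 1 := by
  have hcard := (Ioc (p n) (q n)).card_filter_add_card_filter_le (· ∈ K) (· ∈ K')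
  rw [Nat.card_Ioc] at hcard
  unfold deferredRatio
  rw [← add_div, div_add_one (hpq.sub_pos n).ne']
  refine div_le_div_of_nonneg_right ?_ (hpq.sub_pos n).le
  rw [← Nat.cast_sub (hpq.1 n).le]
  exact_mod_cast (by convert hcard using 4; rfl)

theorem deferredRatio_le_of_forall_le {K : Set ℕ} {M n : ℕ} (hK : ∀ k ∈ K, k ≤ M)
    (hn : M < q n) : deferredRatio p q K n ≤ M / (q n - M) := by
  have hqM : (0 : ℝ) < q n - M := sub_pos.mpr (mod_cast hn)
  rcases ((Ioc (p n) (q n)).filter (· ∈ K)).eq_empty_or_nonempty with hemp | ⟨k, hk⟩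
  · simp only [deferredRatio, hemp, card_empty, Nat.cast_zero, zero_div]
    positivity
  · simp only [mem_filter, mem_Ioc] at hk
    -- `K` meets `(p n, q n]`, so `p n < M` and the denominator `q n - p n` exceeds `q n - M`
    have hpM : p n < M := hk.1.1.trans_le (hK k hk.2)
    have hcard : #((Ioc (p n) (q n)).filter (· ∈ K)) ≤ M :=
      calc _ ≤ #(Ioc (p n) M) := card_le_card fun k hk => by
              simp only [mem_filter, mem_Ioc] at hk ⊢
              exact ⟨hk.1.1, hK k hk.2⟩
        _ ≤ M := by simp
    unfold deferredRatio
    gcongr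

end

namespace DeferredDensity

variable {p q : ℕ → ℕ} {K K' : Set ℕ}

theorem inter_s5 (hpq : DeferredProperty p q) (h : DeferredDensity p q K 1)
    (h' : DeferredDensity p q K' 1) : DeferredDensity p q (K ∩ K') 1 := by
  have hlow : Tendsto (fun n => deferredRatio p q K n + deferredRatio p q K' n - 1) atTop
      (𝓝 1) := by
    simpa using (h.add h').sub_const 1
  refine tendsto_of_tendsto_of_tendsto_of_le_of_le hlow h (fun n => ?_) fun n => ?_
  · simpa using sub_le_iff_le_add.mpr (deferredRatio_add_le hpq K K' n)
  · exact deferredRatio_mono hpq Set.inter_subset_left n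

theorem infinite_s5 (hpq : DeferredProperty p q) (h : DeferredDensity p q K 1) : K.Infinite := by
  intro hfin
  obtain ⟨M, hM⟩ := hfin.bddAbove
  have hbound : Tendsto (fun n => (M : ℝ) / (q n - M)) atTop (𝓝 0) :=
    tendsto_const_nhds.div_atTop <|
      tendsto_atTop_add_const_right _ _ (tendsto_natCast_atTop_atTop.comp hpq.2)
  have hzero : DeferredDensity p q K 0 :=
    squeeze_zero' (.of_forall (hpq.deferredRatio_nonneg K))
      ((hpq.2.eventually_gt_atTop M).mono fun n hn => deferredRatio_le_of_forall_le hM hn)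
      hbound
  exact one_ne_zero (tendsto_nhds_unique h hzero)

end DeferredDensity

theorem stmt5 (p q : ℕ → ℕ) (hpq : DeferredProperty p q) (x : ℕ → E) (a b : E)
    (ha : DStatOrderConv p q x a) (hb : DStatOrderConv p q x b) : a = b := by
  obtain ⟨z, ⟨Kz, -, hKz, hz_anti, hz_inf⟩, Ka, -, hKa, hxa⟩ := ha
  obtain ⟨w, ⟨Kw, -, hKw, hw_anti, hw_inf⟩, Kb, -, hKb, hxb⟩ := hb
  have hK : (Kz ∩ Kw ∩ Ka ∩ Kb).Infinite :=
    (((hKz.inter_s5 hpq hKw).inter_s5 hpq hKa).inter_s5 hpq hKb).infinite_s5 hpq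
  have hle_add : ∀ u ∈ z '' Kz, ∀ v ∈ w '' Kw, |a - b| ≤ u + v := by
    rintro _ ⟨i, hi, rfl⟩ _ ⟨j, hj, rfl⟩
    obtain ⟨k, ⟨⟨⟨hkz, hkw⟩, hka⟩, hkb⟩, hk⟩ := hK.exists_gt (max i j)
    calc |a - b| ≤ |x k - a| + |x k - b| := by
          simpa only [sub_add_sub_cancel, abs_sub_comm a] using abs_add_le (a - x k) (x k - b)
      _ ≤ z k + w k := add_le_add (hxa k hka) (hxb k hkb)
      _ ≤ z i + w j := add_le_add (hz_anti i hi k hkz (by omega)) (hw_anti j hj k hkw (by omega))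
  have habs : |a - b| ≤ 0 := nonpos_of_forall_le_add_of_isGLB hz_inf hw_inf hle_add
  exact sub_eq_zero.mp <|
    le_antisymm ((le_abs_self _).trans habs) (neg_nonpos.mp ((neg_le_abs _).trans habs))
end
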